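/- arXiv:1409.6007 — 7 statements merged into one kernel-verified Lean document; each statement's English description precedes it below -/
import Mathlib

section
/- Let ν > 0, α > 0, P_M > 0 and let G : ℝ → ℝ be C¹ with G'(p) ≤ -α for all p and G(P_M) = 0, and let F(p) = p - νG(p). Let H : [-νG(0), P_M] → [0, P_M] be the inverse of the restriction of F to [0, P_M]. Then H is strictly increasing, differentiable on the interior of its domain with 0 < H'(w) ≤ 1/(1 + να) < 1, the value p_m := H(0) satisfies 0 < p_m ≤ P_M, and H(w) ≥ p_m for every w ∈ [0, P_M]. -/
/-!
Since `G' ≤ -α`, the map `F p = p - ν G p` has `F' ≥ 1 + ν α ≥ 1`. Hence `F` is increasing and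
expanding, so any right inverse `H` of `F` is strictly increasing and `1`-Lipschitz, in particular
continuous, and the inverse function rule gives `H' = 1 / F'(H) ∈ (0, 1 / (1 + ν α)]`. Finally
`G 0 ≥ G P_M + α P_M > 0`, so `F 0 = -ν G 0 < 0`, which places `0` strictly inside the domain of `H`.
-/

open Set Filter Topology

theorem Set.RightInvOn.strictMonoOn {α β : Type*} [LinearOrder α] [Preorder β] {f : α → β}
    {g : β → α} {s : Set β} (h : RightInvOn g f s) (hf : Monotone f) : StrictMonoOn g s := by
  intro x hx y hy hxy
  by_contra! hle
  have hyx := hf hle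
  rw [h hx, h hy] at hyx
  exact lt_irrefl x (hxy.trans_le hyx)

theorem AntilipschitzWith.of_sub_le_sub {f : ℝ → ℝ} (hf : ∀ ⦃x y⦄, x ≤ y → y - x ≤ f y - f x) :
    AntilipschitzWith 1 f := by
  refine AntilipschitzWith.of_le_mul_dist fun x y => ?_
  rw [NNReal.coe_one, one_mul, Real.dist_eq, Real.dist_eq]
  rcases le_total x y with hxy | hyx
  · rw [abs_of_nonpos (by linarith), abs_of_nonpos (by linarith [hf hxy])]
    linarith [hf hxy]
  · rw [abs_of_nonneg (by linarith), abs_of_nonneg (by linarith [hf hyx])]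
    linarith [hf hyx]

section

variable {ν α : ℝ} {G : ℝ → ℝ}

theorem hasDerivAt_sub_mul (hG : Differentiable ℝ G) (p : ℝ) :
    HasDerivAt (fun q => q - ν * G q) (1 - ν * deriv G p) p :=
  (hasDerivAt_id p).sub ((hG p).hasDerivAt.const_mul ν)

theorem one_add_mul_le_one_sub_mul_deriv (hν : 0 ≤ ν) (hG' : ∀ p, deriv G p ≤ -α) (p : ℝ) :
    1 + ν * α ≤ 1 - ν * deriv G p := by
  linarith [mul_le_mul_of_nonneg_left (hG' p) hν]

theorem sub_le_sub_sub_mul (hν : 0 ≤ ν) (hα : 0 ≤ α) (hG : Differentiable ℝ G)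
    (hG' : ∀ p, deriv G p ≤ -α) ⦃x y : ℝ⦄ (hxy : x ≤ y) :
    y - x ≤ (y - ν * G y) - (x - ν * G x) := by
  have hderiv (p : ℝ) : 1 ≤ deriv (fun q => q - ν * G q) p := by
    rw [(hasDerivAt_sub_mul hG p).deriv]
    linarith [one_add_mul_le_one_sub_mul_deriv hν hG' p, mul_nonneg hν hα]
  simpa only [one_mul] using
    mul_sub_le_image_sub_of_le_deriv (fun p => (hasDerivAt_sub_mul hG p).differentiableAt)
      hderiv hxy

theorem hasDerivAt_of_rightInvOn_sub_mul (hν : 0 ≤ ν) (hα : 0 ≤ α) (hG : Differentiable ℝ G)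
    (hG' : ∀ p, deriv G p ≤ -α) {H : ℝ → ℝ} {s : Set ℝ} {w : ℝ} (hs : s ∈ 𝓝 w)
    (hH : RightInvOn H (fun p => p - ν * G p) s) :
    HasDerivAt H (1 - ν * deriv G (H w))⁻¹ w := by
  have hcont : ContinuousOn H s := continuousOn_iff_continuous_domRestrict.mpr
    ((AntilipschitzWith.of_sub_le_sub (sub_le_sub_sub_mul hν hα hG hG')).to_rightInvOn
      hH).continuous
  have hpos : 0 < 1 - ν * deriv G (H w) := by
    linarith [one_add_mul_le_one_sub_mul_deriv hν hG' (H w), mul_nonneg hν hα]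
  exact (hasDerivAt_sub_mul hG (H w)).of_local_left_inverse (hcont.continuousAt hs) hpos.ne'
    (eventually_of_mem hs hH)

end

/-- properties of the inverse `H` of the restriction of
`F p = p - ν * G p` to `[0, P_M]`. -/
theorem stmt1 (ν α P_M : ℝ) (hν : 0 < ν) (hα : 0 < α) (hPM : 0 < P_M)
    (G : ℝ → ℝ) (hG : ContDiff ℝ 1 G) (hG' : ∀ p, deriv G p ≤ -α)
    (hGPM : G P_M = 0)
    (H : ℝ → ℝ)
    (hH1 : ∀ p ∈ Set.Icc (0:ℝ) P_M, H (p - ν * G p) = p)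
    (hH2 : ∀ w ∈ Set.Icc (-(ν * G 0)) P_M,
      H w ∈ Set.Icc (0:ℝ) P_M ∧ H w - ν * G (H w) = w) :
    StrictMonoOn H (Set.Icc (-(ν * G 0)) P_M) ∧
    (∀ w ∈ Set.Ioo (-(ν * G 0)) P_M,
      DifferentiableAt ℝ H w ∧ 0 < deriv H w ∧ deriv H w ≤ 1 / (1 + ν * α)) ∧
    1 / (1 + ν * α) < 1 ∧
    0 < H 0 ∧ H 0 ≤ P_M ∧
    (∀ w ∈ Set.Icc (0:ℝ) P_M, H 0 ≤ H w) := by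
  have hG : Differentiable ℝ G := hG.differentiable one_ne_zero
  have hinv : RightInvOn H (fun p => p - ν * G p) (Icc (-(ν * G 0)) P_M) :=
    fun w hw => (hH2 w hw).2
  have hmono : StrictMonoOn H (Icc (-(ν * G 0)) P_M) := hinv.strictMonoOn fun x y hxy => by
    linarith [sub_le_sub_sub_mul hν.le hα.le hG hG' hxy]
  have hG0 : 0 < G 0 := by
    linarith [image_sub_le_mul_sub_of_deriv_le hG hG' hPM.le, mul_pos hα hPM]
  have hνG0 : 0 < ν * G 0 := mul_pos hν hG0
  have h0 : (0 : ℝ) ∈ Icc (-(ν * G 0)) P_M := ⟨by linarith, hPM.le⟩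
  have hHF0 : H (-(ν * G 0)) = 0 := by simpa using hH1 0 ⟨le_rfl, hPM.le⟩
  refine ⟨hmono, fun w hw => ?_, ?_, ?_, (hH2 0 h0).1.2, fun w hw => ?_⟩
  · have hd := hasDerivAt_of_rightInvOn_sub_mul hν.le hα.le hG hG' (Icc_mem_nhds hw.1 hw.2) hinv
    have hle := one_add_mul_le_one_sub_mul_deriv hν.le hG' (H w)
    have hpos : 0 < 1 + ν * α := by positivity
    rw [hd.deriv, one_div]
    exact ⟨hd.differentiableAt, inv_pos.2 (hpos.trans_le hle), inv_anti₀ hpos hle⟩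
  · rw [div_lt_one (by positivity)]
    linarith [mul_pos hν hα]
  · simpa only [hHF0] using hmono ⟨le_rfl, by linarith⟩ h0 (by linarith)
  · exact hmono.monotoneOn h0 ⟨by linarith [hw.1], hw.2⟩ hw.1
end

section
/- Let P_M > 0 and, for each integer k ≥ 3, let a_k ≥ 0 be a real number and set p_k := (k/(k-1)) a_k^{k-1}. Assume p_k ≤ P_M for all k, that a_k converges to a real number a, and that p_k converges to a real number p. Then a ≤ 1 and p(1 - a) = 0. -/
/-!
Write `p_k = c_k a_k^{k-1}` with `1 ≤ c_k = k/(k-1) ≤ 2`. If `a > 1`, then `a_k^{k-1} → ∞`, so `p_k`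
could not converge. If `a < 1`, then `a_k^{k-1} → 0`, which squeezes `p_k` to `0`, i.e. `p = 0`.
-/

open Filter

lemma one_le_div_sub_one_and_le_two {x : ℝ} (hx : 2 ≤ x) : 1 ≤ x / (x - 1) ∧ x / (x - 1) ≤ 2 := by
  have hx1 : 0 < x - 1 := by linarith
  exact ⟨by rw [le_div_iff₀ hx1]; linarith, by rw [div_le_iff₀ hx1]; linarith⟩

lemma tendsto_pow_atTop_of_tendsto_of_one_lt {a : ℕ → ℝ} {n : ℕ → ℕ} {A : ℝ}
    (ha : Tendsto a atTop (nhds A)) (hA : 1 < A) (hn : Tendsto n atTop atTop) :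
    Tendsto (fun k => a k ^ n k) atTop atTop := by
  obtain ⟨c, hc1, hcA⟩ := exists_between hA
  have hc_le : ∀ᶠ k in atTop, c ≤ a k := (ha.eventually (eventually_gt_nhds hcA)).mono fun _ => le_of_lt
  refine tendsto_atTop_mono' _ ?_ ((tendsto_pow_atTop_atTop_of_one_lt hc1).comp hn)
  filter_upwards [hc_le] with k hk
  exact pow_le_pow_left₀ (by linarith) hk _

lemma tendsto_pow_nhds_zero_of_tendsto_of_lt_one {a : ℕ → ℝ} {n : ℕ → ℕ} {A : ℝ}
    (ha : Tendsto a atTop (nhds A)) (ha_nonneg : ∀ᶠ k in atTop, 0 ≤ a k) (hA : A < 1)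
    (hn : Tendsto n atTop atTop) :
    Tendsto (fun k => a k ^ n k) atTop (nhds 0) := by
  obtain ⟨c, hAc, hc1⟩ := exists_between hA
  have hle_c : ∀ᶠ k in atTop, a k ≤ c := (ha.eventually (eventually_lt_nhds hAc)).mono fun _ => le_of_lt
  have hc0 : 0 ≤ c := by
    obtain ⟨k, hk0, hkc⟩ := (ha_nonneg.and hle_c).exists
    exact hk0.trans hkc
  refine squeeze_zero' (ha_nonneg.mono fun k hk => pow_nonneg hk _) ?_
    ((tendsto_pow_atTop_nhds_zero_of_lt_one hc0 hc1).comp hn)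
  filter_upwards [ha_nonneg, hle_c] with k hk0 hkc
  exact pow_le_pow_left₀ hk0 hkc _

theorem stmt5_general
    (a : ℕ → ℝ) (p : ℕ → ℝ)
    (ha_nonneg : ∀ k, 3 ≤ k → 0 ≤ a k)
    (hp : ∀ k, 3 ≤ k → p k = ((k : ℝ) / ((k : ℝ) - 1)) * (a k) ^ (k - 1))
    (A P : ℝ)
    (ha_lim : Tendsto a atTop (nhds A))
    (hp_lim : Tendsto p atTop (nhds P)) :
    A ≤ 1 ∧ P * (1 - A) = 0 := by
  have hpow_le_p : ∀ᶠ k in atTop, a k ^ (k - 1) ≤ p k ∧ p k ≤ 2 * a k ^ (k - 1) := by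
    filter_upwards [eventually_ge_atTop 3] with k hk
    obtain ⟨h1, h2⟩ := one_le_div_sub_one_and_le_two (x := k) (by exact_mod_cast (by omega : 2 ≤ k))
    have hpow := pow_nonneg (ha_nonneg k hk) (k - 1)
    rw [hp k hk]
    constructor <;> nlinarith
  have ha_nonneg' : ∀ᶠ k in atTop, 0 ≤ a k := (eventually_ge_atTop 3).mono ha_nonneg
  have hA : A ≤ 1 := by
    by_contra! hA
    exact not_tendsto_atTop_of_tendsto_nhds hp_lim <| tendsto_atTop_mono' _
      (hpow_le_p.mono fun _ => And.left) <|
      tendsto_pow_atTop_of_tendsto_of_one_lt ha_lim hA (tendsto_sub_atTop_nat 1)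
  refine ⟨hA, ?_⟩
  rcases hA.eq_or_lt with rfl | hA
  · ring
  have hp_zero : Tendsto p atTop (nhds 0) := by
    have h := (tendsto_pow_nhds_zero_of_tendsto_of_lt_one ha_lim ha_nonneg' hA
      (tendsto_sub_atTop_nat 1)).const_mul 2
    rw [mul_zero] at h
    refine squeeze_zero' ?_ (hpow_le_p.mono fun _ => And.right) h
    filter_upwards [hpow_le_p, ha_nonneg'] with k hk hk0
    exact (pow_nonneg hk0 _).trans hk.1
  rw [tendsto_nhds_unique hp_lim hp_zero, zero_mul]

/-- the stiff-pressure-law limit relation `p (1 - a) = 0`, `a ≤ 1`. -/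
theorem stmt5 (P_M : ℝ) (hPM : 0 < P_M)
    (a : ℕ → ℝ) (p : ℕ → ℝ)
    (ha_nonneg : ∀ k, 3 ≤ k → 0 ≤ a k)
    (hp : ∀ k, 3 ≤ k → p k = ((k : ℝ) / ((k : ℝ) - 1)) * (a k) ^ (k - 1))
    (hp_bd : ∀ k, 3 ≤ k → p k ≤ P_M)
    (A P : ℝ)
    (ha_lim : Tendsto a atTop (nhds A))
    (hp_lim : Tendsto p atTop (nhds P)) :
    A ≤ 1 ∧ P * (1 - A) = 0 :=
  stmt5_general a p ha_nonneg hp A P ha_lim hp_lim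
end

section
/- Let d ≥ 1, ν > 0 and P_M ≥ 0. Suppose W : ℝ^d → ℝ is a bounded C² function and p : ℝ^d → ℝ is a function with 0 ≤ p(x) ≤ P_M for all x, such that -νΔW(x) + W(x) = p(x) for all x ∈ ℝ^d. Then 0 ≤ W(x) ≤ P_M for all x ∈ ℝ^d. -/
open Set

/-- Divergence of a vector field on `ℝ^d`: the trace of its (Fréchet) derivative. -/
noncomputable def vdiv {d : ℕ} (v : EuclideanSpace ℝ (Fin d) → EuclideanSpace ℝ (Fin d))
    (x : EuclideanSpace ℝ (Fin d)) : ℝ :=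
  LinearMap.trace ℝ (EuclideanSpace ℝ (Fin d)) (fderiv ℝ v x : _ →ₗ[ℝ] _)

/-- Laplacian of a scalar function on `ℝ^d`: divergence of the gradient. -/
noncomputable def lap {d : ℕ} (f : EuclideanSpace ℝ (Fin d) → ℝ)
    (x : EuclideanSpace ℝ (Fin d)) : ℝ :=
  vdiv (gradient f) x

/-!
Perturbing a bounded-below `C²` function `f` by `ε ‖y - x₀‖²` makes it coercive, so the perturbed
function attains a global minimum, where its Laplacian is nonnegative. This produces points `x`
with `f x ≤ f x₀` and `Δ f x ≥ -2 d ε`. For a supersolution `f - ν Δ f ≥ 0`, evaluating at such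
points with `x₀` close to the infimum shows `inf f ≥ 0`. The bounds `0 ≤ W ≤ P_M` follow by applying
this to `W` and to `P_M - W`.
-/

open Filter Topology InnerProductSpace Laplacian Module

theorem IsLocalMin.deriv_deriv_nonneg {g : ℝ → ℝ} {a : ℝ} (h : IsLocalMin g a)
    (hc : ContinuousAt g a) : 0 ≤ deriv (deriv g) a := by
  by_contra! hneg
  -- otherwise `a` is also a local maximum, so `g` is locally constant
  have hmax : IsLocalMax g a := isLocalMax_of_deriv_deriv_neg hneg h.deriv_eq_zero hc
  have hconst : g =ᶠ[𝓝 a] fun _ => g a := (h.and hmax).mono fun y hy => le_antisymm hy.2 hy.1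
  have hderiv : deriv g =ᶠ[𝓝 a] fun _ => 0 :=
    hconst.eventuallyEq_nhds.mono fun y hy => by rw [hy.deriv_eq, deriv_const]
  rw [hderiv.deriv_eq, deriv_const] at hneg
  exact lt_irrefl 0 hneg

theorem IsLocalMin.iteratedFDeriv_two_nonneg {E : Type*} [NormedAddCommGroup E]
    [NormedSpace ℝ E] {f : E → ℝ} {x : E} (h : IsLocalMin f x) (hf : ContDiff ℝ 2 f) (v : E) :
    0 ≤ iteratedFDeriv ℝ 2 f x (fun _ => v) := by
  have hline : IsLocalMin (fun t : ℝ => f (x + t • v)) 0 :=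
    IsLocalMin.comp_continuous (g := fun t : ℝ => x + t • v) (by simpa using h) (by fun_prop)
  have hderiv : deriv (fun t : ℝ => f (x + t • v))
      = fun t => iteratedFDeriv ℝ 1 f (x + t • v) (fun _ => v) :=
    funext fun t => by
      simpa using (hf.of_le one_le_two).contDiffAt.deriv_fderiv_add_smul (n := 0) (t := t)
  have := hline.deriv_deriv_nonneg (hf.continuous.comp (by fun_prop)).continuousAt
  rwa [hderiv, hf.contDiffAt.deriv_fderiv_add_smul (n := 1), zero_smul, add_zero] at this

section Laplacian

variable {E : Type*} [NormedAddCommGroup E] [InnerProductSpace ℝ E] [FiniteDimensional ℝ E]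

theorem IsLocalMin.laplacian_nonneg {f : E → ℝ} {x : E} (h : IsLocalMin f x)
    (hf : ContDiff ℝ 2 f) : 0 ≤ Δ f x := by
  rw [laplacian_eq_iteratedFDeriv_stdOrthonormalBasis]
  refine Finset.sum_nonneg fun i _ => ?_
  have hdiag : ![stdOrthonormalBasis ℝ E i, stdOrthonormalBasis ℝ E i]
      = fun _ => stdOrthonormalBasis ℝ E i := by
    funext j; fin_cases j <;> rfl
  exact hdiag ▸ h.iteratedFDeriv_two_nonneg hf _

theorem laplacian_comp_sub (f : E → ℝ) (a x : E) :
    Δ (fun y => f (y - a)) x = Δ f (x - a) := by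
  simp only [laplacian_eq_iteratedFDeriv_stdOrthonormalBasis, iteratedFDeriv_comp_sub]

theorem laplacian_const_sub {f : E → ℝ} {x : E} (hf : ContDiffAt ℝ 2 f x) (c : ℝ) :
    Δ (fun y => c - f y) x = -Δ f x := by
  rw [show (fun y => c - f y) = (fun _ => c) - f from rfl,
    contDiffAt_const.laplacian_sub hf, laplacian_const, Pi.zero_apply, zero_sub]

theorem laplacian_norm_sq (x : E) : Δ (fun y : E => ‖y‖ ^ 2) x = 2 * finrank ℝ E := by
  have hfd : fderiv ℝ (fderiv ℝ fun y : E => ‖y‖ ^ 2) x = 2 • innerSL ℝ := by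
    rw [fderiv_norm_sq]
    exact (2 • innerSL ℝ : E →L[ℝ] E →L[ℝ] ℝ).fderiv
  have hb (i) : innerSL ℝ (stdOrthonormalBasis ℝ E i) (stdOrthonormalBasis ℝ E i) = 1 := by
    rw [innerSL_apply_apply, real_inner_self_eq_norm_sq, (stdOrthonormalBasis ℝ E).norm_eq_one,
      one_pow]
  simp [laplacian_eq_iteratedFDeriv_stdOrthonormalBasis, iteratedFDeriv_two_apply, hfd, hb,
    mul_comm]

theorem exists_le_and_neg_le_laplacian {f : E → ℝ} (hf : ContDiff ℝ 2 f)
    (hbdd : BddBelow (range f)) (x₀ : E) {ε : ℝ} (hε : 0 < ε) :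
    ∃ x, f x ≤ f x₀ ∧ -(2 * finrank ℝ E * ε) ≤ Δ f x := by
  obtain ⟨m, hm⟩ := hbdd
  set q : E → ℝ := fun y => ‖y - x₀‖ ^ 2 with hq_def
  have hq : ContDiff ℝ 2 q := (contDiff_norm_sq ℝ).comp (contDiff_id.sub contDiff_const)
  have hcoercive : Tendsto (f + ε • q) (cocompact E) atTop := by
    have hq_top : Tendsto q (cocompact E) atTop := by
      simpa only [hq_def, ← dist_eq_norm, Function.comp_def] using
        (tendsto_pow_atTop two_ne_zero).comp (tendsto_dist_right_cocompact_atTop x₀)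
    refine tendsto_atTop_mono (fun y => ?_)
      (tendsto_atTop_add_const_left _ m (hq_top.const_mul_atTop hε))
    simpa using hm (mem_range_self y)
  obtain ⟨x, hx⟩ := (hf.add (hq.const_smul ε)).continuous.exists_forall_le hcoercive
  refine ⟨x, ?_, ?_⟩
  · have hqx : 0 ≤ ε * q x := by positivity
    simpa [hq_def] using (hx x₀).trans' (le_add_of_nonneg_right hqx)
  · have hmin : 0 ≤ Δ (f + ε • q) x :=
      IsLocalMin.laplacian_nonneg (Eventually.of_forall hx) (hf.add (hq.const_smul ε))
    rw [hf.contDiffAt.laplacian_add (f₂ := ε • q) (hq.const_smul ε).contDiffAt,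
      laplacian_smul _ hq.contDiffAt, hq_def, laplacian_comp_sub (fun y => ‖y‖ ^ 2),
      laplacian_norm_sq, smul_eq_mul] at hmin
    linarith

theorem nonneg_of_nonneg_sub_mul_laplacian {f : E → ℝ} {ν : ℝ} (hν : 0 ≤ ν)
    (hf : ContDiff ℝ 2 f) (hbdd : BddBelow (range f)) (h : ∀ x, 0 ≤ f x - ν * Δ f x) (x : E) :
    0 ≤ f x := by
  suffices hinf : 0 ≤ ⨅ y, f y from hinf.trans (ciInf_le hbdd x)
  refine le_of_forall_pos_le_add fun ε hε => ?_
  set C : ℝ := 2 * finrank ℝ E * ν + 1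
  have hC : 0 < C := by positivity
  set δ := ε / C
  have hδ : 0 < δ := div_pos hε hC
  obtain ⟨x₀, hx₀⟩ := exists_lt_of_ciInf_lt (lt_add_of_pos_right (⨅ y, f y) hδ)
  obtain ⟨x₁, hle, hlap⟩ := exists_le_and_neg_le_laplacian hf hbdd x₀ hδ
  have hsuper : ν * -(2 * finrank ℝ E * δ) ≤ f x₁ :=
    (mul_le_mul_of_nonneg_left hlap hν).trans (sub_nonneg.mp (h x₁))
  have hCδ : C * δ = ε := mul_div_cancel₀ ε hC.ne'
  linarith

end Laplacian

theorem lap_eq_laplacian {d : ℕ} (f : EuclideanSpace ℝ (Fin d) → ℝ) : lap f = Δ f := by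
  funext x
  let e : StrongDual ℝ (EuclideanSpace ℝ (Fin d)) ≃L[ℝ] EuclideanSpace ℝ (Fin d) :=
    (toDual ℝ _).symm.toContinuousLinearEquiv
  have hgrad : fderiv ℝ (gradient f) x = (e : _ →L[ℝ] _).comp (fderiv ℝ (fderiv ℝ f) x) :=
    e.comp_fderiv (f := fderiv ℝ f)
  rw [lap, vdiv, hgrad, LinearMap.trace_eq_sum_inner _ (EuclideanSpace.basisFun (Fin d) ℝ),
    laplacian_eq_iteratedFDeriv_orthonormalBasis f (EuclideanSpace.basisFun (Fin d) ℝ)]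
  simp only [iteratedFDeriv_two_apply]
  exact Finset.sum_congr rfl fun i _ => (real_inner_comm _ _).trans toDual_symm_apply

theorem stmt11_general (d : ℕ) (ν P_M : ℝ) (hν : 0 < ν)
    (W p : EuclideanSpace ℝ (Fin d) → ℝ)
    (hW_smooth : ContDiff ℝ 2 W)
    (hW_bdd : ∃ M : ℝ, ∀ x, |W x| ≤ M)
    (hp : ∀ x, 0 ≤ p x ∧ p x ≤ P_M)
    (heq : ∀ x, -ν * lap W x + W x = p x) :
    ∀ x, 0 ≤ W x ∧ W x ≤ P_M := by
  obtain ⟨M, hM⟩ := hW_bdd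
  have hsuper (x) : W x - ν * Δ W x = p x := by
    rw [← lap_eq_laplacian]; linarith [heq x]
  have hW_below : BddBelow (range W) :=
    ⟨-M, forall_mem_range.2 fun x => neg_le_of_abs_le (hM x)⟩
  have hgap_below : BddBelow (range fun x => P_M - W x) :=
    ⟨P_M - M, forall_mem_range.2 fun x => sub_le_sub_left (le_of_abs_le (hM x)) _⟩
  have hW_nonneg := nonneg_of_nonneg_sub_mul_laplacian hν.le hW_smooth hW_below
    fun x => (hsuper x).symm ▸ (hp x).1
  have hgap_nonneg := nonneg_of_nonneg_sub_mul_laplacian hν.le (contDiff_const.sub hW_smooth)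
    hgap_below fun x => by
      rw [laplacian_const_sub hW_smooth.contDiffAt]
      linarith [hsuper x, (hp x).2]
  exact fun x => ⟨hW_nonneg x, sub_nonneg.mp (hgap_nonneg x)⟩

/-- maximum principle for bounded solutions of the Brinkman
equation `-νΔW + W = p` on the whole space, with `0 ≤ p ≤ P_M`. -/
theorem stmt11 (d : ℕ) (hd : 1 ≤ d) (ν P_M : ℝ) (hν : 0 < ν) (hPM : 0 ≤ P_M)
    (W p : EuclideanSpace ℝ (Fin d) → ℝ)
    (hW_smooth : ContDiff ℝ 2 W)
    (hW_bdd : ∃ M : ℝ, ∀ x, |W x| ≤ M)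
    (hp : ∀ x, 0 ≤ p x ∧ p x ≤ P_M)
    (heq : ∀ x, -ν * lap W x + W x = p x) :
    ∀ x, 0 ≤ W x ∧ W x ≤ P_M :=
  stmt11_general d ν P_M hν W p hW_smooth hW_bdd hp heq
end

section
/- Let d ≥ 1, T > 0, and G : ℝ → ℝ be continuous and nonincreasing. Let p : ℝ^d × [0,T] → ℝ be continuous and nonnegative, W : ℝ^d × [0,T] → ℝ be C² in the space variable, and n : ℝ^d × [0,T] → ℝ be nonnegative, C¹, with spatial support contained in a fixed ball B_R for every t ∈ [0,T], satisfying pointwise ∂_t n - div(n∇W) = n G(p). Then for every t ∈ [0,T], ∫_{ℝ^d} n(x,t) dx ≤ e^{G(0)·t} ∫_{ℝ^d} n(x,0) dx. -/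
/-! The mass `m(t) = ∫ n(x, t) dx` can be differentiated under the integral sign, since `∂ₜn` is
bounded on the compact set `B_R × [0, T]` and vanishes outside it. The transport term
`div (n ∇W)` is the divergence of a compactly supported `C¹` field, so its integral vanishes
(integration by parts against `1`). Hence `m' = ∫ n G(p) ≤ G(0) m`, because `n ≥ 0`, `p ≥ 0` and
`G` is nonincreasing, and Grönwall's inequality gives `m(t) ≤ e^{G(0) t} m(0)`. -/

open Set MeasureTheory

open Function Filter Topology

theorem derivWithin_eq_zero_of_eqOn_zero {F : Type*} [NormedAddCommGroup F] [NormedSpace ℝ F]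
    {g : ℝ → F} {s : Set ℝ} {t : ℝ} (hg : EqOn g 0 s) (ht : t ∈ s) : derivWithin g s t = 0 := by
  rw [derivWithin_congr hg (hg ht)]
  exact congrFun (derivWithin_fun_const _ _) t

theorem hasDerivWithinAt_integral_of_dominated {α E : Type*} [MeasurableSpace α] {μ : Measure α}
    [NormedAddCommGroup E] [NormedSpace ℝ E] [CompleteSpace E]
    {F F' : α → ℝ → E} {s : Set ℝ} (hs : Convex ℝ s) {t₀ : ℝ} (ht₀ : t₀ ∈ s) {bound : α → ℝ}
    (hF_int : ∀ t ∈ s, Integrable (F · t) μ)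
    (hF' : ∀ x, ∀ t ∈ s, HasDerivWithinAt (F x) (F' x t) s t)
    (h_bound : ∀ x, ∀ t ∈ s, ‖F' x t‖ ≤ bound x) (bound_integrable : Integrable bound μ) :
    HasDerivWithinAt (fun t => ∫ x, F x t ∂μ) (∫ x, F' x t₀ ∂μ) s t₀ := by
  rw [hasDerivWithinAt_iff_tendsto_slope]
  have hmem : ∀ᶠ t in 𝓝[s \ {t₀}] t₀, t ∈ s \ {t₀} := self_mem_nhdsWithin
  refine (tendsto_integral_filter_of_dominated_convergence bound ?_ ?_ bound_integrable
    (ae_of_all _ fun x => hasDerivWithinAt_iff_tendsto_slope.1 (hF' x t₀ ht₀))).congr' ?_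
  · filter_upwards [hmem] with t ht
    exact (((hF_int t ht.1).sub (hF_int t₀ ht₀)).smul (t - t₀)⁻¹).aestronglyMeasurable
  · filter_upwards [hmem] with t ht
    refine ae_of_all _ fun x => ?_
    have hmvt := hs.norm_image_sub_le_of_norm_hasDerivWithin_le (hF' x) (h_bound x) ht₀ ht.1
    rw [slope_def_module, norm_smul, norm_inv, ← div_eq_inv_mul,
      div_le_iff₀ (norm_pos_iff.2 (sub_ne_zero.2 ht.2))]
    exact hmvt
  · filter_upwards [hmem] with t ht
    simp only [slope_def_module]
    rw [integral_smul, integral_sub (hF_int t ht.1) (hF_int t₀ ht₀)]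

section SlicewiseDerivative

variable {E F : Type*} [NormedAddCommGroup E] [NormedSpace ℝ E] [NormedAddCommGroup F]
  [NormedSpace ℝ F] {f : E → ℝ → F} {s : Set ℝ} {K : Set E}

theorem ContDiffOn.uncurry_right {n : WithTop ℕ∞} (hf : ContDiffOn ℝ n (uncurry f) (univ ×ˢ s))
    {t : ℝ} (ht : t ∈ s) : ContDiff ℝ n (f · t) :=
  contDiffOn_univ.1 <| hf.comp (contDiff_id.prodMk contDiff_const).contDiffOn
    fun x _ => ⟨mem_univ x, ht⟩

theorem DifferentiableOn.hasDerivWithinAt_of_uncurry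
    (hf : DifferentiableOn ℝ (uncurry f) (univ ×ˢ s)) (x : E) {t : ℝ} (ht : t ∈ s) :
    HasDerivWithinAt (f x) (fderivWithin ℝ (uncurry f) (univ ×ˢ s) (x, t) (0, 1)) s t :=
  (hf (x, t) ⟨mem_univ x, ht⟩).hasFDerivWithinAt.comp_hasDerivWithinAt t
    ((hasDerivAt_const t x).prodMk (hasDerivAt_id t)).hasDerivWithinAt
    fun _ hu => ⟨mem_univ x, hu⟩

theorem ContDiffOn.continuousOn_derivWithin_of_uncurry
    (hf : ContDiffOn ℝ 1 (uncurry f) (univ ×ˢ s)) (hs : UniqueDiffOn ℝ s) :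
    ContinuousOn (uncurry fun x t => derivWithin (f x) s t) (univ ×ˢ s) := by
  refine ((hf.continuousOn_fderivWithin (uniqueDiffOn_univ.prod hs) le_rfl).clm_apply
    (continuousOn_const (c := ((0 : E), (1 : ℝ))))).congr ?_
  rintro ⟨x, t⟩ ⟨-, ht⟩
  exact ((hf.differentiableOn one_ne_zero).hasDerivWithinAt_of_uncurry x ht).derivWithin (hs t ht)

theorem ContDiffOn.exists_norm_derivWithin_le_indicator
    (hf : ContDiffOn ℝ 1 (uncurry f) (univ ×ˢ s)) (hs : UniqueDiffOn ℝ s) (hs' : IsCompact s)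
    (hK : IsCompact K) (hsupp : ∀ t ∈ s, ∀ x ∉ K, f x t = 0) :
    ∃ M, ∀ x, ∀ t ∈ s, ‖derivWithin (f x) s t‖ ≤ K.indicator (fun _ => M) x := by
  obtain ⟨M, hM⟩ := (hK.prod hs').exists_bound_of_continuousOn
    ((hf.continuousOn_derivWithin_of_uncurry hs).mono (prod_mono (subset_univ K) subset_rfl))
  refine ⟨M, fun x t ht => ?_⟩
  by_cases hx : x ∈ K
  · rw [indicator_of_mem hx]
    exact hM (x, t) ⟨hx, ht⟩
  · rw [indicator_of_notMem hx, derivWithin_eq_zero_of_eqOn_zero (fun u hu => hsupp u hu x hx) ht,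
      norm_zero]

variable [MeasurableSpace E] [OpensMeasurableSpace E] {μ : Measure E} [IsFiniteMeasureOnCompacts μ]
  {a b t : ℝ}

theorem integrable_derivWithin_of_contDiffOn (hab : a < b)
    (hf : ContDiffOn ℝ 1 (uncurry f) (univ ×ˢ Icc a b)) (hK : IsCompact K)
    (hsupp : ∀ t ∈ Icc a b, ∀ x ∉ K, f x t = 0) (ht : t ∈ Icc a b) :
    Integrable (fun x => derivWithin (f x) (Icc a b) t) μ :=
  (continuousOn_univ.1 ((hf.continuousOn_derivWithin_of_uncurry (uniqueDiffOn_Icc hab)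
    ).uncurry_right t ht)).integrable_of_hasCompactSupport <| .intro hK fun x hx =>
      derivWithin_eq_zero_of_eqOn_zero (fun u hu => hsupp u hu x hx) ht

theorem hasDerivWithinAt_integral_of_contDiffOn [CompleteSpace F] (hab : a < b)
    (hf : ContDiffOn ℝ 1 (uncurry f) (univ ×ˢ Icc a b)) (hK : IsCompact K)
    (hsupp : ∀ t ∈ Icc a b, ∀ x ∉ K, f x t = 0) (ht : t ∈ Icc a b) :
    HasDerivWithinAt (fun t => ∫ x, f x t ∂μ) (∫ x, derivWithin (f x) (Icc a b) t ∂μ)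
      (Icc a b) t := by
  obtain ⟨M, hM⟩ := hf.exists_norm_derivWithin_le_indicator (uniqueDiffOn_Icc hab) isCompact_Icc
    hK hsupp
  refine hasDerivWithinAt_integral_of_dominated (convex_Icc a b) ht
    (fun t ht => ?_) (fun x t ht => ?_) hM
    ((integrableOn_const hK.measure_lt_top.ne).integrable_indicator hK.measurableSet)
  · exact (hf.uncurry_right ht).continuous.integrable_of_hasCompactSupport (.intro hK (hsupp t ht))
  · exact ((hf.differentiableOn one_ne_zero).hasDerivWithinAt_of_uncurry x ht
      ).differentiableWithinAt.hasDerivWithinAt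

end SlicewiseDerivative

theorem integral_fderiv_eq_zero_of_hasCompactSupport {E F : Type*} [NormedAddCommGroup E]
    [NormedSpace ℝ E] [FiniteDimensional ℝ E] [MeasurableSpace E] [BorelSpace E]
    {μ : Measure E} [μ.IsAddHaarMeasure] [NormedAddCommGroup F] [NormedSpace ℝ F]
    [CompleteSpace F] {f : E → F} (hf : ContDiff ℝ 1 f) (h : HasCompactSupport f) :
    ∫ x, fderiv ℝ f x ∂μ = 0 := by
  have hf' : Continuous (fderiv ℝ f) := hf.continuous_fderiv one_ne_zero
  have hf'_supp : HasCompactSupport (fderiv ℝ f) := h.fderiv (𝕜 := ℝ)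
  ext v
  have hf'v : Integrable (fun x => fderiv ℝ f x v) μ :=
    (hf'.clm_apply continuous_const).integrable_of_hasCompactSupport
      (hf'_supp.comp_left (g := fun L : E →L[ℝ] F => L v) rfl)
  rw [ContinuousLinearMap.integral_apply (hf'.integrable_of_hasCompactSupport hf'_supp)]
  simpa using integral_smul_fderiv_eq_neg_fderiv_smul_of_integrable (μ := μ)
    (f := fun _ => (1 : ℝ)) (g := f) (v := v) (by simp) (by simpa using hf'v)
    (by simpa using hf.continuous.integrable_of_hasCompactSupport h)
    (fun x _ => differentiableAt_const _) (fun x _ => hf.differentiable one_ne_zero x)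

theorem integral_vdiv_eq_zero_of_hasCompactSupport {d : ℕ}
    {v : EuclideanSpace ℝ (Fin d) → EuclideanSpace ℝ (Fin d)} (hv : ContDiff ℝ 1 v)
    (h : HasCompactSupport v) : ∫ x, vdiv v x = 0 := by
  let trace : (EuclideanSpace ℝ (Fin d) →L[ℝ] EuclideanSpace ℝ (Fin d)) →L[ℝ] ℝ :=
    (LinearMap.trace ℝ _ ∘ₗ ContinuousLinearMap.coeLM ℝ).toContinuousLinearMap
  calc ∫ x, vdiv v x = ∫ x, trace (fderiv ℝ v x) := rfl
    _ = trace (∫ x, fderiv ℝ v x) := trace.integral_comp_comm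
        ((hv.continuous_fderiv one_ne_zero).integrable_of_hasCompactSupport (h.fderiv (𝕜 := ℝ)))
    _ = 0 := by rw [integral_fderiv_eq_zero_of_hasCompactSupport hv h, map_zero]

theorem ContDiff.gradient {E : Type*} [NormedAddCommGroup E] [InnerProductSpace ℝ E]
    [CompleteSpace E] {f : E → ℝ} {n : WithTop ℕ∞} (hf : ContDiff ℝ (n + 1) f) :
    ContDiff ℝ n (gradient f) :=
  (InnerProductSpace.toDual ℝ E).symm.contDiff.comp (hf.fderiv_right le_rfl)

theorem le_exp_mul_of_hasDerivWithinAt_le {f f' : ℝ → ℝ} {K a b : ℝ}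
    (hf : ∀ t ∈ Icc a b, HasDerivWithinAt f (f' t) (Icc a b) t)
    (hf' : ∀ t ∈ Ico a b, f' t ≤ K * f t) :
    ∀ t ∈ Icc a b, f t ≤ Real.exp (K * (t - a)) * f a := by
  intro t ht
  have hright : ∀ t ∈ Ico a b, HasDerivWithinAt f (f' t) (Ici t) t := fun t ht =>
    (hf t (Ico_subset_Icc_self ht)).mono_of_mem_nhdsWithin <| mem_of_superset
      (Ico_mem_nhdsGE ht.2) (Ico_subset_Icc_self.trans (Icc_subset_Icc_left ht.1))
  have := le_gronwallBound_of_liminf_deriv_right_le (K := K) (ε := 0)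
    (fun t ht => (hf t ht).continuousWithinAt)
    (fun t ht _ hr => (hright t ht).liminf_right_slope_le hr) le_rfl
    (fun t ht => (add_zero (K * f t)).symm ▸ hf' t ht) t ht
  rwa [gronwallBound_ε0, mul_comm] at this

theorem stmt12_general (d : ℕ) (T : ℝ) (hT : 0 < T)
    (G : ℝ → ℝ) (hGc : Continuous G) (hGmono : ∀ a b : ℝ, a ≤ b → G b ≤ G a)
    (p W n : EuclideanSpace ℝ (Fin d) → ℝ → ℝ)
    (hp_cont : ContinuousOn (fun q : EuclideanSpace ℝ (Fin d) × ℝ => p q.1 q.2)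
      (Set.univ ×ˢ Set.Icc 0 T))
    (hp_nonneg : ∀ x, ∀ t ∈ Set.Icc (0:ℝ) T, 0 ≤ p x t)
    (hW_smooth : ∀ t ∈ Set.Icc (0:ℝ) T, ContDiff ℝ 2 (fun x => W x t))
    (hn_nonneg : ∀ x, ∀ t ∈ Set.Icc (0:ℝ) T, 0 ≤ n x t)
    (hn_smooth : ContDiffOn ℝ 1 (fun q : EuclideanSpace ℝ (Fin d) × ℝ => n q.1 q.2)
      (Set.univ ×ˢ Set.Icc 0 T))
    (R : ℝ)
    (hsupp : ∀ t ∈ Set.Icc (0:ℝ) T, ∀ x, x ∉ Metric.closedBall (0 : EuclideanSpace ℝ (Fin d)) R →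
      n x t = 0)
    (hPDE : ∀ x, ∀ t ∈ Set.Icc (0:ℝ) T,
      derivWithin (fun s => n x s) (Set.Icc 0 T) t
        - vdiv (fun y => n y t • gradient (fun y' => W y' t) y) x
        = n x t * G (p x t)) :
    ∀ t ∈ Set.Icc (0:ℝ) T,
      (∫ x, n x t) ≤ Real.exp (G 0 * t) * ∫ x, n x 0 := by
  have hslice : ∀ t ∈ Icc 0 T, ContDiff ℝ 1 (n · t) := fun t ht => hn_smooth.uncurry_right ht
  have hcompact : ∀ t ∈ Icc 0 T, HasCompactSupport (n · t) := fun t ht =>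
    .intro (isCompact_closedBall 0 R) (hsupp t ht)
  have hgrowth_int : ∀ t ∈ Icc 0 T, Integrable (fun x => n x t * G (p x t)) := fun t ht =>
    ((hslice t ht).continuous.mul (hGc.comp (continuousOn_univ.1 (hp_cont.uncurry_right t ht)))
      ).integrable_of_hasCompactSupport (hcompact t ht).mul_right
  have hbalance : ∀ t ∈ Icc 0 T,
      ∫ x, derivWithin (n x) (Icc 0 T) t = ∫ x, n x t * G (p x t) := by
    intro t ht
    have hflux : ∫ x, vdiv (fun y => n y t • gradient (fun y' => W y' t) y) x = 0 :=
      integral_vdiv_eq_zero_of_hasCompactSupport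
        ((hslice t ht).smul (hW_smooth t ht).gradient) (hcompact t ht).smul_right
    refine sub_eq_zero.1 ((integral_sub (integrable_derivWithin_of_contDiffOn hT hn_smooth
      (isCompact_closedBall 0 R) hsupp ht) (hgrowth_int t ht)).symm.trans ?_)
    refine (integral_congr_ae (ae_of_all _ fun x => ?_)).trans hflux
    linarith [hPDE x t ht]
  have hgrowth : ∀ t ∈ Icc 0 T, ∫ x, n x t * G (p x t) ≤ G 0 * ∫ x, n x t := by
    intro t ht
    rw [← integral_const_mul]
    refine integral_mono (hgrowth_int t ht)
      (((hslice t ht).continuous.integrable_of_hasCompactSupport (hcompact t ht)).const_mul _)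
      fun x => ?_
    simpa only [mul_comm (G 0)] using
      mul_le_mul_of_nonneg_left (hGmono 0 _ (hp_nonneg x t ht)) (hn_nonneg x t ht)
  simpa using le_exp_mul_of_hasDerivWithinAt_le
    (fun t ht => hasDerivWithinAt_integral_of_contDiffOn hT hn_smooth
      (isCompact_closedBall 0 R) hsupp ht)
    fun t ht => (hbalance t (Ico_subset_Icc_self ht)).trans_le (hgrowth t (Ico_subset_Icc_self ht))

/-- Grönwall-type `L¹` bound for the transport equation with
growth `∂ₜ n - div(n∇W) = n G(p)`, for compactly (spatially) supported `n`. -/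
theorem stmt12 (d : ℕ) (hd : 1 ≤ d) (T : ℝ) (hT : 0 < T)
    (G : ℝ → ℝ) (hGc : Continuous G) (hGmono : ∀ a b : ℝ, a ≤ b → G b ≤ G a)
    (p W n : EuclideanSpace ℝ (Fin d) → ℝ → ℝ)
    (hp_cont : ContinuousOn (fun q : EuclideanSpace ℝ (Fin d) × ℝ => p q.1 q.2)
      (Set.univ ×ˢ Set.Icc 0 T))
    (hp_nonneg : ∀ x, ∀ t ∈ Set.Icc (0:ℝ) T, 0 ≤ p x t)
    (hW_smooth : ∀ t ∈ Set.Icc (0:ℝ) T, ContDiff ℝ 2 (fun x => W x t))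
    (hn_nonneg : ∀ x, ∀ t ∈ Set.Icc (0:ℝ) T, 0 ≤ n x t)
    (hn_smooth : ContDiffOn ℝ 1 (fun q : EuclideanSpace ℝ (Fin d) × ℝ => n q.1 q.2)
      (Set.univ ×ˢ Set.Icc 0 T))
    (R : ℝ)
    (hsupp : ∀ t ∈ Set.Icc (0:ℝ) T, ∀ x, x ∉ Metric.closedBall (0 : EuclideanSpace ℝ (Fin d)) R →
      n x t = 0)
    (hPDE : ∀ x, ∀ t ∈ Set.Icc (0:ℝ) T,
      derivWithin (fun s => n x s) (Set.Icc 0 T) t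
        - vdiv (fun y => n y t • gradient (fun y' => W y' t) y) x
        = n x t * G (p x t)) :
    ∀ t ∈ Set.Icc (0:ℝ) T,
      (∫ x, n x t) ≤ Real.exp (G 0 * t) * ∫ x, n x 0 :=
  stmt12_general d T hT G hGc hGmono p W n hp_cont hp_nonneg hW_smooth hn_nonneg hn_smooth R hsupp
    hPDE
end

section
/- Let ν > 0 and P_M > 0, and define p : (-∞,0) → ℝ by p(x) = P_M (1 - e^{x/√(ν+1)} / (ν + 1 + √(ν(ν+1)))). Then 0 < p(x) < P_M for all x < 0, and the left limit of p at 0 equals P_M (1 - 1/(ν + 1 + √(ν(ν+1)))), which is strictly positive. In particular, since the traveling wave pressure is identically 0 on (0,∞), the pressure has a jump discontinuity of height P_M (1 - 1/(ν + 1 + √(ν(ν+1)))) at the interface x = 0. -/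
open Set Filter

lemma one_lt_add_one_add_sqrt_mul {ν : ℝ} (hν : 0 < ν) : 1 < ν + 1 + Real.sqrt (ν * (ν + 1)) := by
  linarith [Real.sqrt_nonneg (ν * (ν + 1))]

lemma exp_div_div_lt_one {x s c : ℝ} (hx : x ≤ 0) (hs : 0 ≤ s) (hc : 1 < c) :
    Real.exp (x / s) / c < 1 := by
  rw [div_lt_one (by linarith)]
  exact (Real.exp_le_one_iff.2 (div_nonpos_of_nonpos_of_nonneg hx hs)).trans_lt hc

lemma mul_one_sub_exp_div_div_pos {P x s c : ℝ} (hP : 0 < P) (hx : x ≤ 0) (hs : 0 ≤ s)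
    (hc : 1 < c) : 0 < P * (1 - Real.exp (x / s) / c) :=
  mul_pos hP (sub_pos.2 (exp_div_div_lt_one hx hs hc))

lemma mul_one_sub_exp_div_div_lt {P c : ℝ} (x s : ℝ) (hP : 0 < P) (hc : 0 < c) :
    P * (1 - Real.exp (x / s) / c) < P :=
  mul_lt_of_lt_one_right hP (sub_lt_self 1 (div_pos (Real.exp_pos _) hc))

/-- the traveling wave pressure
`p(x) = P_M (1 - e^{x/√(ν+1)}/(ν+1+√(ν(ν+1))))` satisfies `0 < p < P_M` on
`(-∞,0)`, and its left limit at `0` is the strictly positive number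
`P_M (1 - 1/(ν+1+√(ν(ν+1))))`: the pressure jumps at the interface. -/
theorem stmt17 (ν P_M : ℝ) (hν : 0 < ν) (hPM : 0 < P_M)
    (p : ℝ → ℝ)
    (hp : p = fun x =>
      P_M * (1 - Real.exp (x / Real.sqrt (ν + 1)) / (ν + 1 + Real.sqrt (ν * (ν + 1))))) :
    (∀ x < (0:ℝ), 0 < p x ∧ p x < P_M) ∧
    Tendsto p (nhdsWithin 0 (Set.Iio 0))
      (nhds (P_M * (1 - 1 / (ν + 1 + Real.sqrt (ν * (ν + 1)))))) ∧
    0 < P_M * (1 - 1 / (ν + 1 + Real.sqrt (ν * (ν + 1)))) := by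
  subst hp
  have hD := one_lt_add_one_add_sqrt_mul hν
  have hs := Real.sqrt_nonneg (ν + 1)
  have hp_zero := mul_one_sub_exp_div_div_pos hPM le_rfl hs hD
  rw [zero_div, Real.exp_zero] at hp_zero
  refine ⟨fun x hx => ⟨mul_one_sub_exp_div_div_pos hPM hx.le hs hD,
    mul_one_sub_exp_div_div_lt x _ hPM (by linarith)⟩, ?_, hp_zero⟩
  have hcont : Continuous fun x : ℝ =>
      P_M * (1 - Real.exp (x / Real.sqrt (ν + 1)) / (ν + 1 + Real.sqrt (ν * (ν + 1)))) := by
    fun_prop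
  simpa using (hcont.tendsto 0).mono_left nhdsWithin_le_nhds
end

section
/- Let ν > 0 and P_M > 0, set W₀ := √ν P_M/(√ν + √(ν+1)), and define W : ℝ → ℝ by W(x) = W₀ e^{-x/√ν} for x ≥ 0 and W(x) = P_M (1 - e^{x/√(ν+1)} / (1 + √(ν/(ν+1)))) for x < 0, and define p : ℝ → ℝ by p(x) = 0 for x ≥ 0 and p(x) = P_M (1 - e^{x/√(ν+1)} / (ν + 1 + √(ν(ν+1)))) for x < 0. Then: (i) W is continuous and continuously differentiable on all of ℝ; (ii) -νW''(x) + W(x) = 0 for all x > 0; (iii) -νW''(x) + W(x) = p(x) for all x < 0; and (iv) p(x) = (W(x) + νP_M)/(1+ν) for all x < 0, i.e. p = H(W) inside the tumor region for the growth law G(p) = P_M - p. -/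
/-!
Both branches of `W` are of the form `A + B e^{x/c}`, whose second derivative is `(· - A)/c²`;
so the Brinkman equation on each side is an algebraic identity, with `c² = ν` on the right
(`A = 0`) and `c² = ν + 1` on the left (`A = P_M`), where it reduces to `p = (W + νP_M)/(1+ν)`.
The constant `W₀` and the factor `1 + √(ν/(ν+1))` are exactly what makes the values and the
slopes of the two branches agree at `0`, so the glued function is `C¹`.
-/

open Set Filter Topology

section Gluing

variable {f g : ℝ → ℝ} {a x : ℝ}

theorem eventuallyEq_ite_le_of_lt (hx : a < x) :
    (fun y => if a ≤ y then f y else g y) =ᶠ[𝓝 x] f := by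
  filter_upwards [Ioi_mem_nhds hx] with y hy
  exact if_pos hy.le

theorem eventuallyEq_ite_le_of_gt (hx : x < a) :
    (fun y => if a ≤ y then f y else g y) =ᶠ[𝓝 x] g := by
  filter_upwards [Iio_mem_nhds hx] with y hy
  exact if_neg (not_le.mpr hy)

theorem hasDerivAt_ite_le (hf : Differentiable ℝ f) (hg : Differentiable ℝ g)
    (hfg : f a = g a) (hfg' : deriv f a = deriv g a) (x : ℝ) :
    HasDerivAt (fun y => if a ≤ y then f y else g y)
      (if a ≤ x then deriv f x else deriv g x) x := by
  rcases lt_trichotomy x a with hx | rfl | hx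
  · rw [if_neg (not_le.mpr hx)]
    exact (hg x).hasDerivAt.congr_of_eventuallyEq (eventuallyEq_ite_le_of_gt hx)
  · have hright :
        HasDerivWithinAt (fun y => if x ≤ y then f y else g y) (deriv f x) (Ici x) x :=
      (hf x).hasDerivAt.hasDerivWithinAt.congr (fun y hy => if_pos hy) (if_pos le_rfl)
    have hleft :
        HasDerivWithinAt (fun y => if x ≤ y then f y else g y) (deriv f x) (Iic x) x := by
      rw [hfg']
      refine (hg x).hasDerivAt.hasDerivWithinAt.congr (fun y hy => ?_) (by simp [hfg])
      rcases (mem_Iic.mp hy).eq_or_lt with rfl | hy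
      · simp [hfg]
      · exact if_neg (not_le.mpr hy)
    rw [if_pos le_rfl, ← hasDerivWithinAt_univ, ← Iic_union_Ici]
    exact hleft.union hright
  · rw [if_pos hx.le]
    exact (hf x).hasDerivAt.congr_of_eventuallyEq (eventuallyEq_ite_le_of_lt hx)

theorem contDiff_one_ite_le (hf : ContDiff ℝ 1 f) (hg : ContDiff ℝ 1 g)
    (hfg : f a = g a) (hfg' : deriv f a = deriv g a) :
    ContDiff ℝ 1 (fun y => if a ≤ y then f y else g y) := by
  have hderiv := hasDerivAt_ite_le (hf.differentiable one_ne_zero)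
    (hg.differentiable one_ne_zero) hfg hfg'
  refine contDiff_one_iff_deriv.mpr ⟨fun x => (hderiv x).differentiableAt, ?_⟩
  rw [funext fun x => (hderiv x).deriv]
  exact Continuous.if_le hf.continuous_deriv_one hg.continuous_deriv_one continuous_const
    continuous_id fun x hx => hx ▸ hfg'

theorem deriv_deriv_ite_le_of_lt (hx : a < x) :
    deriv (deriv fun y => if a ≤ y then f y else g y) x = deriv (deriv f) x :=
  (eventuallyEq_ite_le_of_lt hx).deriv.deriv_eq

theorem deriv_deriv_ite_le_of_gt (hx : x < a) :
    deriv (deriv fun y => if a ≤ y then f y else g y) x = deriv (deriv g) x :=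
  (eventuallyEq_ite_le_of_gt hx).deriv.deriv_eq

end Gluing

section ExpProfile

open Real

noncomputable def expProfile (A B c x : ℝ) : ℝ := A + B * exp (x / c)

variable (A B : ℝ) {c : ℝ}

theorem deriv_expProfile : deriv (expProfile A B c) = expProfile 0 (B / c) c := by
  funext x
  have h : HasDerivAt (expProfile A B c) (B * (exp (x / c) * (1 / c))) x :=
    (((hasDerivAt_id' x).div_const c).exp.const_mul B).const_add A
  rw [h.deriv, expProfile]
  ring

theorem contDiff_expProfile {n : WithTop ℕ∞} : ContDiff ℝ n (expProfile A B c) := by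
  unfold expProfile
  fun_prop

theorem deriv_deriv_expProfile (hc : c ≠ 0) (x : ℝ) :
    deriv (deriv (expProfile A B c)) x = (expProfile A B c x - A) / c ^ 2 := by
  rw [deriv_expProfile, deriv_expProfile]
  simp only [expProfile]
  field_simp
  ring

end ExpProfile

section Interface

open Real

variable {ν : ℝ} (hν : 0 < ν) (P : ℝ)
include hν

theorem one_add_sqrt_div_mul_one_add :
    (1 + √(ν / (ν + 1))) * (1 + ν) = ν + 1 + √(ν * (ν + 1)) := by
  have ht2 : √(ν + 1) ^ 2 = ν + 1 := sq_sqrt (by linarith)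
  have ht : 0 < √(ν + 1) := sqrt_pos.mpr (by linarith)
  rw [sqrt_div hν.le, sqrt_mul hν.le]
  field_simp
  linear_combination -√ν * ht2

theorem expProfile_interface_value :
    expProfile 0 (√ν * P / (√ν + √(ν + 1))) (-√ν) 0 =
      expProfile P (-(P / (1 + √(ν / (ν + 1))))) (√(ν + 1)) 0 := by
  have ht : 0 < √(ν + 1) := sqrt_pos.mpr (by linarith)
  have hs : 0 < √ν := sqrt_pos.mpr hν
  simp only [expProfile, zero_div, exp_zero, sqrt_div hν.le]
  field_simp
  ring

theorem expProfile_interface_slope :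
    deriv (expProfile 0 (√ν * P / (√ν + √(ν + 1))) (-√ν)) 0 =
      deriv (expProfile P (-(P / (1 + √(ν / (ν + 1))))) (√(ν + 1))) 0 := by
  have ht : 0 < √(ν + 1) := sqrt_pos.mpr (by linarith)
  have hs : 0 < √ν := sqrt_pos.mpr hν
  simp only [deriv_expProfile, expProfile, zero_div, exp_zero, sqrt_div hν.le]
  field_simp
  ring

end Interface

theorem stmt18_general (ν P_M : ℝ) (hν : 0 < ν)
    (W₀ : ℝ) (hW₀ : W₀ = Real.sqrt ν * P_M / (Real.sqrt ν + Real.sqrt (ν + 1)))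
    (W p : ℝ → ℝ)
    (hW : W = fun x => if 0 ≤ x then W₀ * Real.exp (-x / Real.sqrt ν)
      else P_M * (1 - Real.exp (x / Real.sqrt (ν + 1)) / (1 + Real.sqrt (ν / (ν + 1)))))
    (hp : p = fun x => if 0 ≤ x then 0
      else P_M * (1 - Real.exp (x / Real.sqrt (ν + 1)) / (ν + 1 + Real.sqrt (ν * (ν + 1))))) :
    Continuous W ∧ ContDiff ℝ 1 W ∧
    (∀ x > (0:ℝ), -ν * deriv (deriv W) x + W x = 0) ∧
    (∀ x < (0:ℝ), -ν * deriv (deriv W) x + W x = p x) ∧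
    (∀ x < (0:ℝ), p x = (W x + ν * P_M) / (1 + ν)) := by
  subst hW₀
  set R := expProfile 0 (Real.sqrt ν * P_M / (Real.sqrt ν + Real.sqrt (ν + 1))) (-Real.sqrt ν)
  set L := expProfile P_M (-(P_M / (1 + Real.sqrt (ν / (ν + 1))))) (Real.sqrt (ν + 1))
  have hWRL : W = fun x => if 0 ≤ x then R x else L x := by
    rw [hW]
    funext x
    simp only [R, L, expProfile, div_neg, neg_div]
    split_ifs <;> ring
  have hC1 : ContDiff ℝ 1 W := hWRL ▸ contDiff_one_ite_le (contDiff_expProfile _ _)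
    (contDiff_expProfile _ _) (expProfile_interface_value hν P_M)
    (expProfile_interface_slope hν P_M)
  have hpW : ∀ x < (0:ℝ), p x = (W x + ν * P_M) / (1 + ν) := by
    intro x hx
    simp only [hp, hW, if_neg (not_le.mpr hx), ← one_add_sqrt_div_mul_one_add hν]
    field_simp
    ring
  have hs : Real.sqrt ν ≠ 0 := (Real.sqrt_pos.mpr hν).ne'
  have ht : Real.sqrt (ν + 1) ≠ 0 := (Real.sqrt_pos.mpr (by linarith)).ne'
  refine ⟨hC1.continuous, hC1, fun x hx => ?_, fun x hx => ?_, hpW⟩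
  · subst hWRL
    simp only [R, deriv_deriv_ite_le_of_lt hx, if_pos hx.le,
      deriv_deriv_expProfile _ _ (neg_ne_zero.mpr hs), neg_sq, Real.sq_sqrt hν.le]
    field_simp
    ring
  · rw [hpW x hx]
    subst hWRL
    simp only [L, deriv_deriv_ite_le_of_gt hx, if_neg (not_le.mpr hx),
      deriv_deriv_expProfile _ _ ht, Real.sq_sqrt (by linarith : (0:ℝ) ≤ ν + 1)]
    field_simp
    ring

/-- the explicit traveling wave profile `(W, p)` is a `C¹`
solution of the Brinkman equation `-νW'' + W = p` across the interface,
and `p = H(W) = (W + νP_M)/(1+ν)` inside the tumor region. -/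
theorem stmt18 (ν P_M : ℝ) (hν : 0 < ν) (hPM : 0 < P_M)
    (W₀ : ℝ) (hW₀ : W₀ = Real.sqrt ν * P_M / (Real.sqrt ν + Real.sqrt (ν + 1)))
    (W p : ℝ → ℝ)
    (hW : W = fun x => if 0 ≤ x then W₀ * Real.exp (-x / Real.sqrt ν)
      else P_M * (1 - Real.exp (x / Real.sqrt (ν + 1)) / (1 + Real.sqrt (ν / (ν + 1)))))
    (hp : p = fun x => if 0 ≤ x then 0
      else P_M * (1 - Real.exp (x / Real.sqrt (ν + 1)) / (ν + 1 + Real.sqrt (ν * (ν + 1))))) :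
    Continuous W ∧ ContDiff ℝ 1 W ∧
    (∀ x > (0:ℝ), -ν * deriv (deriv W) x + W x = 0) ∧
    (∀ x < (0:ℝ), -ν * deriv (deriv W) x + W x = p x) ∧
    (∀ x < (0:ℝ), p x = (W x + ν * P_M) / (1 + ν)) :=
  stmt18_general ν P_M hν W₀ hW₀ W p hW hp
end

section
/- Let ν > 0, W₀ > 0 and G₀ > 0. Suppose n : (0,∞) → ℝ is C¹, satisfies 0 ≤ n(x) ≤ 1 for all x > 0, and solves -n'(x) · (W₀/√ν)(1 - e^{-x/√ν}) = n(x) · (G₀ + (W₀/ν) e^{-x/√ν}) for all x > 0. Then n(x) = 0 for all x > 0. -/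
/-!
Write `b(x) = 1 - e^{-x/√ν}`, so that `b' = e^{-x/√ν}/√ν`. The equation says exactly that
`(W₀/√ν) (n b)' = -G₀ n ≤ 0`, so `m = n b` is nonincreasing on `(0,∞)`. Since `0 ≤ n ≤ 1`,
`0 ≤ m ≤ b`, and `b(y) → 0` as `y → 0⁺`; hence `m(x) ≤ m(y) ≤ b(y)` forces `m ≡ 0`, and `b > 0`
gives `n ≡ 0`.
-/

open Set Filter Topology Real

theorem AntitoneOn.le_of_le_of_tendsto_nhdsGT {f g : ℝ → ℝ} {a L x : ℝ}
    (hf : AntitoneOn f (Ioi a)) (hfg : ∀ y > a, f y ≤ g y)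
    (hg : Tendsto g (𝓝[>] a) (𝓝 L)) (hx : a < x) : f x ≤ L := by
  refine ge_of_tendsto hg ?_
  filter_upwards [Ioo_mem_nhdsGT hx] with y hy
  exact (hf hy.1 hx hy.2.le).trans (hfg y hy.1)

theorem hasDerivAt_one_sub_exp_neg_div (s x : ℝ) :
    HasDerivAt (fun x ↦ 1 - exp (-x / s)) (exp (-x / s) / s) x :=
  (((hasDerivAt_neg x).div_const s).exp.const_sub 1).congr_deriv (by ring)

theorem tendsto_one_sub_exp_neg_div_nhdsGT_zero (s : ℝ) :
    Tendsto (fun x ↦ 1 - exp (-x / s)) (𝓝[>] 0) (𝓝 0) := by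
  simpa using (hasDerivAt_one_sub_exp_neg_div s 0).continuousAt.tendsto.mono_left
    (nhdsWithin_le_nhds (s := Ioi 0))

theorem one_sub_exp_neg_div_pos {s x : ℝ} (hs : 0 < s) (hx : 0 < x) :
    0 < 1 - exp (-x / s) := by
  have : exp (-x / s) < 1 := exp_lt_one_iff.mpr (div_neg_of_neg_of_pos (neg_neg_of_pos hx) hs)
  linarith

/-- With `d = n'(x)`, `N = n(x)`, `e = e^{-x/√ν}` and `b = 1 - e`, the conclusion reads
`(n b)'(x) ≤ 0`. -/
theorem deriv_mul_add_mul_nonpos_of_eq {ν W G d N b e : ℝ} (hν : 0 < ν) (hW : 0 < W)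
    (hG : 0 ≤ G) (hN : 0 ≤ N)
    (h : -d * (W / √ν) * b = N * (G + W / ν * e)) :
    d * b + N * (e / √ν) ≤ 0 := by
  have hs : 0 < √ν := sqrt_pos.mpr hν
  have hWν : W / ν = W / √ν * (1 / √ν) := by
    rw [div_mul_div_comm, mul_one, mul_self_sqrt hν.le]
  have key : (d * b + N * (e / √ν)) * (W / √ν) = -(N * G) := by
    rw [hWν] at h
    linear_combination -h
  have hWs : 0 < W / √ν := div_pos hW hs
  nlinarith [mul_nonneg hN hG]

theorem antitoneOn_mul_one_sub_exp_of_eq {ν W G : ℝ} {n : ℝ → ℝ} (hν : 0 < ν) (hW : 0 < W)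
    (hG : 0 ≤ G) (hn : DifferentiableOn ℝ n (Ioi 0)) (hn_nonneg : ∀ x > 0, 0 ≤ n x)
    (hODE : ∀ x > (0:ℝ), -deriv n x * (W / √ν) * (1 - exp (-x / √ν))
        = n x * (G + W / ν * exp (-x / √ν))) :
    AntitoneOn (fun x ↦ n x * (1 - exp (-x / √ν))) (Ioi 0) := by
  have hderiv : ∀ x ∈ Ioi (0:ℝ), HasDerivAt (fun x ↦ n x * (1 - exp (-x / √ν)))
      (deriv n x * (1 - exp (-x / √ν)) + n x * (exp (-x / √ν) / √ν)) x := fun x hx ↦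
    ((hn x hx).differentiableAt (isOpen_Ioi.mem_nhds hx)).hasDerivAt.mul
      (hasDerivAt_one_sub_exp_neg_div _ x)
  refine antitoneOn_of_hasDerivWithinAt_nonpos (convex_Ioi 0)
    (fun x hx ↦ (hderiv x hx).continuousAt.continuousWithinAt) (f' := fun x ↦
      deriv n x * (1 - exp (-x / √ν)) + n x * (exp (-x / √ν) / √ν)) ?_ ?_ <;> rw [interior_Ioi]
  · exact fun x hx ↦ (hderiv x hx).hasDerivWithinAt
  · exact fun x hx ↦ deriv_mul_add_mul_nonpos_of_eq hν hW hG (hn_nonneg x hx) (hODE x hx)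

/-- the traveling wave density ahead of the tumor front
vanishes identically: if `0 ≤ n ≤ 1` is `C¹` on `(0,∞)` and solves
`-n'(x) (W₀/√ν)(1 - e^{-x/√ν}) = n(x)(G₀ + (W₀/ν) e^{-x/√ν})`, then `n ≡ 0`
on `(0,∞)`. -/
theorem stmt19 (ν W₀ G₀ : ℝ) (hν : 0 < ν) (hW₀ : 0 < W₀) (hG₀ : 0 < G₀)
    (n : ℝ → ℝ)
    (hn_smooth : ContDiffOn ℝ 1 n (Set.Ioi 0))
    (hn_bd : ∀ x > (0:ℝ), 0 ≤ n x ∧ n x ≤ 1)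
    (hODE : ∀ x > (0:ℝ),
      -deriv n x * (W₀ / Real.sqrt ν) * (1 - Real.exp (-x / Real.sqrt ν))
        = n x * (G₀ + (W₀ / ν) * Real.exp (-x / Real.sqrt ν))) :
    ∀ x > (0:ℝ), n x = 0 := by
  intro x hx
  have hanti := antitoneOn_mul_one_sub_exp_of_eq hν hW₀ hG₀.le
    (hn_smooth.differentiableOn one_ne_zero) (fun y hy ↦ (hn_bd y hy).1) hODE
  have hb : ∀ y > (0:ℝ), 0 < 1 - exp (-y / √ν) := fun y hy ↦
    one_sub_exp_neg_div_pos (sqrt_pos.mpr hν) hy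
  have hm_le : n x * (1 - exp (-x / √ν)) ≤ 0 :=
    hanti.le_of_le_of_tendsto_nhdsGT
      (fun y hy ↦ mul_le_of_le_one_left (hb y hy).le (hn_bd y hy).2)
      (tendsto_one_sub_exp_neg_div_nhdsGT_zero _) hx
  have hm_nonneg := mul_nonneg (hn_bd x hx).1 (hb x hx).le
  exact (mul_eq_zero.mp (le_antisymm hm_le hm_nonneg)).resolve_right (hb x hx).ne'
end
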